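/- arXiv:2602.06858 — 7 statements merged into one kernel-verified Lean document; each statement's English description precedes it below -/
import Mathlib

section
/- The RoBoS-NN loss is bounded: for every real u, 0 ≤ L(u) < λ. -/
noncomputable def robos (a lam eps : ℝ) (u : ℝ) : ℝ :=
  lam * (1 - (a * Real.sqrt (u ^ 2 + eps) - a * Real.sqrt eps + 1) *
    Real.exp (-(a * Real.sqrt (u ^ 2 + eps) - a * Real.sqrt eps)))

/-! With `t = a (√(u² + ε) - √ε) ≥ 0` the loss is `λ (1 - (t + 1) e^{-t})`, and
`0 < (t + 1) e^{-t} ≤ 1` because `t + 1 ≤ e^t`. -/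

open Real

lemma add_one_mul_exp_neg_le_one (t : ℝ) : (t + 1) * exp (-t) ≤ 1 := by
  rw [exp_neg, mul_inv_le_iff₀ (exp_pos t), one_mul]
  exact add_one_le_exp t

lemma add_one_mul_exp_neg_pos {t : ℝ} (ht : -1 < t) : 0 < (t + 1) * exp (-t) :=
  mul_pos (by linarith) (exp_pos _)

lemma sqrt_le_sqrt_sq_add (u eps : ℝ) : √eps ≤ √(u ^ 2 + eps) :=
  sqrt_le_sqrt (le_add_of_nonneg_left (sq_nonneg u))

theorem robos_bounded_general (a lam eps : ℝ) (ha : 0 < a) (hlam : 0 < lam) :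
    ∀ u : ℝ, 0 ≤ robos a lam eps u ∧ robos a lam eps u < lam := by
  intro u
  unfold robos
  set t := a * √(u ^ 2 + eps) - a * √eps
  have ht : 0 ≤ t := by
    rw [sub_nonneg]
    exact mul_le_mul_of_nonneg_left (sqrt_le_sqrt_sq_add u eps) ha.le
  have hle := add_one_mul_exp_neg_le_one t
  have hpos := add_one_mul_exp_neg_pos (t := t) (by linarith)
  exact ⟨mul_nonneg hlam.le (sub_nonneg.2 hle), by nlinarith⟩

theorem robos_bounded (a lam eps : ℝ) (ha : 0 < a) (hlam : 0 < lam) (heps : 0 < eps) :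
    ∀ u : ℝ, 0 ≤ robos a lam eps u ∧ robos a lam eps u < lam :=
  robos_bounded_general a lam eps ha hlam
end

section
/- The RoBoS-NN loss saturates at its bound parameter: L(u) tends to λ as u → +∞, and L(u) tends to λ as u → −∞. -/
open Filter Topology Real

lemma tendsto_add_one_mul_exp_neg_atTop :
    Tendsto (fun x : ℝ => (x + 1) * exp (-x)) atTop (𝓝 0) := by
  have h := (tendsto_pow_mul_exp_neg_atTop_nhds_zero 1).add tendsto_exp_neg_atTop_nhds_zero
  simp only [pow_one, add_zero] at h
  simpa only [add_mul, one_mul] using h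

lemma tendsto_sqrt_sq_add_cocompact (c : ℝ) :
    Tendsto (fun u : ℝ => √(u ^ 2 + c)) (cocompact ℝ) atTop := by
  have hsq : Tendsto (fun u : ℝ => ‖u‖ ^ 2) (cocompact ℝ) atTop :=
    (tendsto_pow_atTop two_ne_zero).comp tendsto_norm_cocompact_atTop
  simp only [Real.norm_eq_abs, sq_abs] at hsq
  exact tendsto_sqrt_atTop.comp (tendsto_atTop_add_const_right _ c hsq)

theorem tendsto_robos_cocompact {a : ℝ} (lam eps : ℝ) (ha : 0 < a) :
    Tendsto (robos a lam eps) (cocompact ℝ) (𝓝 lam) := by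
  have hg : Tendsto (fun u : ℝ => a * √(u ^ 2 + eps) - a * √eps) (cocompact ℝ) atTop :=
    tendsto_atTop_add_const_right _ _ ((tendsto_sqrt_sq_add_cocompact eps).const_mul_atTop ha)
  have h := ((tendsto_add_one_mul_exp_neg_atTop.comp hg).const_sub 1).const_mul lam
  rw [sub_zero, mul_one] at h
  exact h

theorem robos_saturates_general (a lam eps : ℝ) (ha : 0 < a) :
    Filter.Tendsto (robos a lam eps) Filter.atTop (nhds lam) ∧
    Filter.Tendsto (robos a lam eps) Filter.atBot (nhds lam) :=
  ⟨(tendsto_robos_cocompact lam eps ha).mono_left atTop_le_cocompact,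
    (tendsto_robos_cocompact lam eps ha).mono_left atBot_le_cocompact⟩

theorem robos_saturates (a lam eps : ℝ) (ha : 0 < a) (hlam : 0 < lam) (heps : 0 < eps) :
    Filter.Tendsto (robos a lam eps) Filter.atTop (nhds lam) ∧
    Filter.Tendsto (robos a lam eps) Filter.atBot (nhds lam) :=
  robos_saturates_general a lam eps ha
end

section
/- The derivative of the RoBoS-NN loss is uniformly bounded: for every real u, |L′(u)| ≤ λ·a/e, where e is Euler's number and L′ denotes the derivative of L. -/
open Real

noncomputable def robosProfile (t : ℝ) : ℝ := 1 - (t + 1) * exp (-t)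

noncomputable def robosShift (a eps : ℝ) (u : ℝ) : ℝ := a * √(u ^ 2 + eps) - a * √eps

lemma robos_eq_comp (a lam eps : ℝ) :
    robos a lam eps = fun u ↦ lam * robosProfile (robosShift a eps u) :=
  rfl

lemma hasDerivAt_robosProfile (t : ℝ) : HasDerivAt robosProfile (t * exp (-t)) t := by
  have h := (((hasDerivAt_id t).add_const 1).mul (hasDerivAt_id t).neg.exp).const_sub 1
  refine h.congr_deriv ?_
  simp only [Pi.neg_apply, id]
  ring

lemma robosShift_nonneg {a eps : ℝ} (ha : 0 ≤ a) (u : ℝ) : 0 ≤ robosShift a eps u := by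
  have hsqrt : √eps ≤ √(u ^ 2 + eps) := sqrt_le_sqrt (by nlinarith [sq_nonneg u])
  exact sub_nonneg.2 (mul_le_mul_of_nonneg_left hsqrt ha)

lemma hasDerivAt_robosShift (a : ℝ) {eps : ℝ} (heps : 0 < eps) (u : ℝ) :
    HasDerivAt (robosShift a eps) (a * (u / √(u ^ 2 + eps))) u := by
  have hsq : HasDerivAt (fun x : ℝ ↦ x ^ 2 + eps) (2 * u) u := by
    simpa using (hasDerivAt_pow 2 u).add_const eps
  have h := ((hsq.sqrt (by positivity)).const_mul a).sub_const (a * √eps)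
  refine h.congr_deriv ?_
  field_simp

lemma abs_div_sqrt_sq_add_le_one {eps : ℝ} (heps : 0 ≤ eps) (u : ℝ) :
    |u / √(u ^ 2 + eps)| ≤ 1 := by
  rw [abs_div, abs_of_nonneg (sqrt_nonneg _)]
  exact div_le_one_of_le₀ (abs_le_sqrt (by linarith)) (sqrt_nonneg _)

theorem robos_deriv_bounded (a lam eps : ℝ) (ha : 0 < a) (hlam : 0 < lam) (heps : 0 < eps) :
    ∀ u : ℝ, |deriv (robos a lam eps) u| ≤ lam * a / Real.exp 1 := by
  intro u
  set g := robosShift a eps u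
  have hderiv : HasDerivAt (robos a lam eps)
      (lam * (g * exp (-g) * (a * (u / √(u ^ 2 + eps))))) u := by
    rw [robos_eq_comp]
    exact ((hasDerivAt_robosProfile g).comp u (hasDerivAt_robosShift a heps u)).const_mul lam
  have hpeak : |g * exp (-g)| ≤ exp (-1) := by
    rw [abs_of_nonneg (mul_nonneg (robosShift_nonneg ha.le u) (exp_pos _).le)]
    exact mul_exp_neg_le_exp_neg_one g
  have hslope : |a * (u / √(u ^ 2 + eps))| ≤ a := by
    rw [abs_mul, abs_of_pos ha]
    exact mul_le_of_le_one_right ha.le (abs_div_sqrt_sq_add_le_one heps.le u)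
  calc |deriv (robos a lam eps) u|
      = lam * (|g * exp (-g)| * |a * (u / √(u ^ 2 + eps))|) := by
        rw [hderiv.deriv, abs_mul, abs_mul, abs_of_pos hlam]
    _ ≤ lam * (exp (-1) * a) := by gcongr
    _ = lam * a / exp 1 := by rw [exp_neg]; field_simp
end

section
/- The RoBoS-NN loss is globally Lipschitz continuous with Lipschitz constant λ·a/e: for all real u, v, |L(u) − L(v)| ≤ (λ·a/e)·|u − v|, where e is Euler's number. -/
open Real

/-- The distribution function of the Gamma(2, 1) law. -/
noncomputable def gammaTwoCDF (t : ℝ) : ℝ := 1 - (t + 1) * exp (-t)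

theorem hasDerivAt_gammaTwoCDF (t : ℝ) : HasDerivAt gammaTwoCDF (t * exp (-t)) t := by
  have h : HasDerivAt (fun x => 1 - (x + 1) * exp (-x))
      (-(1 * exp (-t) + (t + 1) * (exp (-t) * -1))) t :=
    (((hasDerivAt_id' t).add_const 1).mul (hasDerivAt_neg t).exp).const_sub 1
  exact h.congr_deriv (by ring)

theorem abs_gammaTwoCDF_sub_le {s t : ℝ} (hs : 0 ≤ s) (ht : 0 ≤ t) :
    |gammaTwoCDF s - gammaTwoCDF t| ≤ exp (-1) * |s - t| := by
  have hbound : ∀ x ∈ Set.Ici (0 : ℝ), ‖x * exp (-x)‖ ≤ exp (-1) := fun x hx => by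
    rw [norm_of_nonneg (mul_nonneg hx (exp_pos _).le)]
    exact mul_exp_neg_le_exp_neg_one x
  exact (convex_Ici 0).norm_image_sub_le_of_norm_hasDerivWithin_le
    (fun x _ => (hasDerivAt_gammaTwoCDF x).hasDerivWithinAt) hbound ht hs

theorem abs_sqrt_sq_add_sub_sqrt_sq_add_le {c : ℝ} (hc : 0 ≤ c) (u v : ℝ) :
    |√(u ^ 2 + c) - √(v ^ 2 + c)| ≤ |u - v| := by
  have hmod : ∀ x : ℝ, √(x ^ 2 + c) = ‖(x : ℂ) + (√c : ℝ) * Complex.I‖ := fun x => by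
    rw [Complex.norm_add_mul_I, sq_sqrt hc]
  calc |√(u ^ 2 + c) - √(v ^ 2 + c)|
      = |‖(u : ℂ) + (√c : ℝ) * Complex.I‖ - ‖(v : ℂ) + (√c : ℝ) * Complex.I‖| := by
        rw [hmod, hmod]
    _ ≤ ‖(u : ℂ) + (√c : ℝ) * Complex.I - ((v : ℂ) + (√c : ℝ) * Complex.I)‖ :=
        abs_norm_sub_norm_le _ _
    _ = |u - v| := by
        rw [add_sub_add_right_eq_sub, ← Complex.ofReal_sub, Complex.norm_real, Real.norm_eq_abs]

theorem robos_eq_gammaTwoCDF (a lam eps u : ℝ) :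
    robos a lam eps u = lam * gammaTwoCDF (a * (√(u ^ 2 + eps) - √eps)) := by
  simp only [robos, gammaTwoCDF, mul_sub]

theorem robos_lipschitz (a lam eps : ℝ) (ha : 0 < a) (hlam : 0 < lam) (heps : 0 < eps) :
    ∀ u v : ℝ, |robos a lam eps u - robos a lam eps v| ≤ (lam * a / Real.exp 1) * |u - v| := by
  intro u v
  have hinner_nonneg : ∀ x : ℝ, 0 ≤ a * (√(x ^ 2 + eps) - √eps) := fun x =>
    mul_nonneg ha.le (sub_nonneg.2 (sqrt_le_sqrt (by nlinarith [sq_nonneg x])))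
  have hinner_lip : |a * (√(u ^ 2 + eps) - √eps) - a * (√(v ^ 2 + eps) - √eps)| ≤ a * |u - v| := by
    rw [← mul_sub, sub_sub_sub_cancel_right, abs_mul, abs_of_pos ha]
    exact mul_le_mul_of_nonneg_left (abs_sqrt_sq_add_sub_sqrt_sq_add_le heps.le u v) ha.le
  calc |robos a lam eps u - robos a lam eps v|
      = lam * |gammaTwoCDF (a * (√(u ^ 2 + eps) - √eps)) -
          gammaTwoCDF (a * (√(v ^ 2 + eps) - √eps))| := by
        rw [robos_eq_gammaTwoCDF, robos_eq_gammaTwoCDF, ← mul_sub, abs_mul, abs_of_pos hlam]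
    _ ≤ lam * (exp (-1) * (a * |u - v|)) := by
        gcongr
        exact (abs_gammaTwoCDF_sub_le (hinner_nonneg u) (hinner_nonneg v)).trans
          (mul_le_mul_of_nonneg_left hinner_lip (exp_pos _).le)
    _ = (lam * a / Real.exp 1) * |u - v| := by
        rw [exp_neg]
        ring
end

section
/- The RoBoS-NN loss is not a convex function on ℝ: there exist real numbers u, v and t ∈ [0,1] such that L(t·u + (1−t)·v) > t·L(u) + (1−t)·L(v). -/
open Filter Topology Real

lemma exists_lt_at_convex_combination_of_forall_lt_of_tendsto_atTop {f : ℝ → ℝ} {c : ℝ}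
    (hlt : ∀ u, f u < c) (hf : Tendsto f atTop (𝓝 c)) :
    ∃ u v t : ℝ, 0 ≤ t ∧ t ≤ 1 ∧ t * f u + (1 - t) * f v < f (t * u + (1 - t) * v) := by
  obtain ⟨m, hm⟩ := (hf.eventually (lt_mem_nhds (show (c + f 0) / 2 < c by linarith [hlt 0]))).exists
  refine ⟨2 * m, 0, 1 / 2, by norm_num, by norm_num, ?_⟩
  have hmid : (1 / 2 : ℝ) * (2 * m) + (1 - 1 / 2) * 0 = m := by ring
  rw [hmid]
  linarith [hlt (2 * m)]

lemma tendsto_one_sub_add_one_mul_exp_neg_atTop :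
    Tendsto (fun s : ℝ => 1 - (s + 1) * exp (-s)) atTop (𝓝 1) := by
  have h : Tendsto (fun s : ℝ => s * exp (-s) + exp (-s)) atTop (𝓝 0) := by
    simpa using (tendsto_pow_mul_exp_neg_atTop_nhds_zero 1).add tendsto_exp_neg_atTop_nhds_zero
  simpa [add_mul] using h.const_sub 1

lemma tendsto_sqrt_sq_add_atTop (eps : ℝ) : Tendsto (fun u : ℝ => √(u ^ 2 + eps)) atTop atTop :=
  tendsto_sqrt_atTop.comp (tendsto_atTop_add_const_right _ eps (tendsto_pow_atTop two_ne_zero))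

section Robos

variable {a lam eps : ℝ}

lemma robos_lt (ha : 0 ≤ a) (hlam : 0 < lam) (u : ℝ) : robos a lam eps u < lam := by
  have hs : 0 ≤ a * √(u ^ 2 + eps) - a * √eps :=
    sub_nonneg.2 (mul_le_mul_of_nonneg_left (sqrt_le_sqrt (by nlinarith [sq_nonneg u])) ha)
  have : 0 < (a * √(u ^ 2 + eps) - a * √eps + 1) * exp (-(a * √(u ^ 2 + eps) - a * √eps)) := by
    positivity
  unfold robos
  nlinarith

lemma tendsto_robos_atTop (ha : 0 < a) : Tendsto (robos a lam eps) atTop (𝓝 lam) := by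
  have hs : Tendsto (fun u => a * √(u ^ 2 + eps) - a * √eps) atTop atTop :=
    tendsto_atTop_add_const_right _ _ ((tendsto_sqrt_sq_add_atTop eps).const_mul_atTop ha)
  have h := (tendsto_one_sub_add_one_mul_exp_neg_atTop.comp hs).const_mul lam
  rwa [mul_one] at h

end Robos

theorem robos_not_convex_general (a lam eps : ℝ) (ha : 0 < a) (hlam : 0 < lam) :
    ∃ u v t : ℝ, 0 ≤ t ∧ t ≤ 1 ∧
      t * robos a lam eps u + (1 - t) * robos a lam eps v <
        robos a lam eps (t * u + (1 - t) * v) :=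
  exists_lt_at_convex_combination_of_forall_lt_of_tendsto_atTop (robos_lt ha.le hlam)
    (tendsto_robos_atTop ha)

theorem robos_not_convex (a lam eps : ℝ) (ha : 0 < a) (hlam : 0 < lam) (heps : 0 < eps) :
    ∃ u v t : ℝ, 0 ≤ t ∧ t ≤ 1 ∧
      t * robos a lam eps u + (1 - t) * robos a lam eps v <
        robos a lam eps (t * u + (1 - t) * v) :=
  robos_not_convex_general a lam eps ha hlam
end

section
/- The RoBoSS loss is continuously differentiable on all of ℝ (including at u = 0), with derivative L₀′(u) = λ·a²·u·exp(−a·u) for u > 0 and L₀′(u) = 0 for u ≤ 0. -/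
noncomputable def roboss (a lam : ℝ) (u : ℝ) : ℝ :=
  if 0 < u then lam * (1 - (a * u + 1) * Real.exp (-(a * u))) else 0

noncomputable def robossDeriv (a lam : ℝ) (u : ℝ) : ℝ :=
  if 0 < u then lam * a ^ 2 * u * Real.exp (-(a * u)) else 0

/-! The positive piece `g u = λ (1 - (a u + 1) e^{-a u})` of the loss satisfies `g 0 = 0` and
`g' 0 = 0`, so gluing it to the zero function at the origin keeps both the function and its
derivative continuous, and the two one-sided derivatives at `0` agree (both are `0`). -/

open Set Topology

section

variable {f f' : ℝ → ℝ}

theorem continuous_ite_pos (hf : Continuous f) (h0 : f 0 = 0) :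
    Continuous fun u => if 0 < u then f u else 0 := by
  have h : (fun u => if 0 < u then f u else 0) = fun u => f (max u 0) := by
    ext u
    rcases lt_or_ge 0 u with hu | hu
    · simp [hu, hu.le]
    · simp [hu.not_gt, hu, h0]
  rw [h]
  fun_prop

theorem hasDerivAt_ite_pos (hf : ∀ x, HasDerivAt f (f' x) x) (h0 : f 0 = 0) (h0' : f' 0 = 0)
    (x : ℝ) :
    HasDerivAt (fun u => if 0 < u then f u else 0) (if 0 < x then f' x else 0) x := by
  rcases lt_trichotomy x 0 with hx | rfl | hx
  · have h : (fun u => if 0 < u then f u else 0) =ᶠ[𝓝 x] fun _ => 0 := by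
      filter_upwards [Iio_mem_nhds hx] with u (hu : u < 0)
      simp [hu.not_gt]
    simpa [hx.not_gt] using (hasDerivAt_const x (0 : ℝ)).congr_of_eventuallyEq h
  · have left : HasDerivWithinAt (fun u => if 0 < u then f u else 0) 0 (Iic 0) 0 :=
      (hasDerivWithinAt_const 0 _ 0).congr (fun u (hu : u ≤ 0) => by simp [hu.not_gt]) (by simp)
    have right : HasDerivWithinAt (fun u => if 0 < u then f u else 0) 0 (Ici 0) 0 := by
      refine (h0' ▸ (hf 0).hasDerivWithinAt).congr (fun u hu => ?_) (by simp [h0])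
      rcases (mem_Ici.mp hu).lt_or_eq with hu | rfl
      · simp [hu]
      · simp [h0]
    simpa [← hasDerivWithinAt_univ] using left.union right
  · have h : (fun u => if 0 < u then f u else 0) =ᶠ[𝓝 x] f := by
      filter_upwards [Ioi_mem_nhds hx] with u hu
      simp [mem_Ioi.mp hu]
    simpa [hx] using (hf x).congr_of_eventuallyEq h

end

theorem hasDerivAt_roboss_piece (a lam u : ℝ) :
    HasDerivAt (fun u => lam * (1 - (a * u + 1) * Real.exp (-(a * u))))
      (lam * a ^ 2 * u * Real.exp (-(a * u))) u := by
  have hlin : HasDerivAt (fun u => a * u) a u := by simpa using (hasDerivAt_id u).const_mul a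
  have hexp : HasDerivAt (fun u => Real.exp (-(a * u))) (Real.exp (-(a * u)) * -a) u :=
    hlin.neg.exp
  exact ((((hlin.add_const 1).mul hexp).const_sub 1).const_mul lam).congr_deriv (by ring)

theorem roboss_contDiffOne_general (a lam : ℝ) :
    (∀ u : ℝ, HasDerivAt (roboss a lam) (robossDeriv a lam u) u) ∧
    Continuous (robossDeriv a lam) :=
  ⟨hasDerivAt_ite_pos (hasDerivAt_roboss_piece a lam) (by simp) (by simp),
    continuous_ite_pos (by fun_prop) (by simp)⟩

theorem roboss_contDiffOne (a lam : ℝ) (ha : 0 < a) (hlam : 0 < lam) :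
    (∀ u : ℝ, HasDerivAt (roboss a lam) (robossDeriv a lam u) u) ∧
    Continuous (robossDeriv a lam) :=
  roboss_contDiffOne_general a lam
end

section
/- The derivative of the RoBoS-NN loss is bounded uniformly in the residual by a constant that matches the Lipschitz constant used in the generalization bound: sup over u ∈ ℝ of |L′(u)| is at most λ·a/e, and moreover the bound λ·a/e is not attained at any real u (the supremum is strict at every point), since |u|/√(u² + ε) < 1 for every real u when ε > 0. -/
open Real

lemma abs_lt_sqrt_sq_add {ε : ℝ} (hε : 0 < ε) (u : ℝ) : |u| < √(u ^ 2 + ε) := by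
  rw [← sqrt_sq_eq_abs]
  exact sqrt_lt_sqrt (sq_nonneg u) (lt_add_of_pos_right _ hε)

lemma abs_div_sqrt_sq_add_lt_one {ε : ℝ} (hε : 0 < ε) (u : ℝ) : |u| / √(u ^ 2 + ε) < 1 :=
  (div_lt_one (sqrt_pos.2 (by positivity))).2 (abs_lt_sqrt_sq_add hε u)

lemma hasDerivAt_sqrt_sq_add {ε : ℝ} (hε : 0 < ε) (u : ℝ) :
    HasDerivAt (fun u ↦ √(u ^ 2 + ε)) (u / √(u ^ 2 + ε)) u := by
  have hpos : 0 < u ^ 2 + ε := by positivity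
  convert ((hasDerivAt_pow 2 u).add_const ε).sqrt hpos.ne' using 1
  field_simp
  ring

lemma hasDerivAt_one_sub_add_one_mul_exp_neg (t : ℝ) :
    HasDerivAt (fun t ↦ 1 - (t + 1) * exp (-t)) (t * exp (-t)) t := by
  have h := (((hasDerivAt_id' t).add_const 1).mul (hasDerivAt_neg t).exp).const_sub 1
  exact h.congr_deriv (by ring)

lemma robos_hasDerivAt (a lam : ℝ) {eps : ℝ} (heps : 0 < eps) (u : ℝ) :
    HasDerivAt (robos a lam eps)
      (lam * ((a * √(u ^ 2 + eps) - a * √eps) * exp (-(a * √(u ^ 2 + eps) - a * √eps)) *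
        (a * (u / √(u ^ 2 + eps))))) u := by
  have hshift := ((hasDerivAt_sqrt_sq_add heps u).const_mul a).sub_const (a * √eps)
  exact ((hasDerivAt_one_sub_add_one_mul_exp_neg _).comp u hshift).const_mul lam

lemma abs_deriv_robos_lt {a lam eps : ℝ} (ha : 0 < a) (hlam : 0 < lam) (heps : 0 < eps)
    (u : ℝ) : |deriv (robos a lam eps) u| < lam * a / exp 1 := by
  rw [(robos_hasDerivAt a lam heps u).deriv]
  set s := √(u ^ 2 + eps)
  set t := a * s - a * √eps
  have ht : 0 ≤ t :=
    sub_nonneg.2 <| mul_le_mul_of_nonneg_left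
      (sqrt_le_sqrt (le_add_of_nonneg_left (sq_nonneg u))) ha.le
  have hu : |u / s| < 1 := by
    rw [abs_div, abs_of_pos (sqrt_pos.2 (by positivity))]
    exact abs_div_sqrt_sq_add_lt_one heps u
  rw [abs_mul lam, abs_mul (t * exp (-t)), abs_mul a, abs_of_pos hlam, abs_of_pos ha,
    abs_of_nonneg (by positivity : 0 ≤ t * exp (-t)), mul_div_assoc, div_eq_mul_inv a,
    ← exp_neg]
  refine mul_lt_mul_of_pos_left ?_ hlam
  calc t * exp (-t) * (a * |u / s|) ≤ exp (-1) * (a * |u / s|) := by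
        gcongr; exact mul_exp_neg_le_exp_neg_one t
    _ < exp (-1) * a := by gcongr; exact mul_lt_of_lt_one_right ha hu
    _ = a * exp (-1) := mul_comm _ _

theorem robos_deriv_bound_strict (a lam eps : ℝ) (ha : 0 < a) (hlam : 0 < lam) (heps : 0 < eps) :
    (∀ u : ℝ, |deriv (robos a lam eps) u| ≤ lam * a / Real.exp 1) ∧
    (∀ u : ℝ, |deriv (robos a lam eps) u| < lam * a / Real.exp 1) ∧
    (∀ u : ℝ, |u| / Real.sqrt (u ^ 2 + eps) < 1) :=
  ⟨fun u ↦ (abs_deriv_robos_lt ha hlam heps u).le, abs_deriv_robos_lt ha hlam heps,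
    abs_div_sqrt_sq_add_lt_one heps⟩
end
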